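/- arXiv:1011.1528 — 2 statements merged into one kernel-verified Lean document; each statement's English description precedes it below -/
import Mathlib

section
/- Let K be a commutative ring with unity and let k, l be nonnegative integers not both equal to zero. Then in K⟨{a,b}⟩ one has λ(a^k b a^l) = (−1)^k C(k+l, k) λ(b a^{k+l}) = (−1)^k C(k+l, k) (b a^{k+l} − a b a^{k+l−1}), where C(k+l, k) is a binomial coefficient. -/
open scoped BigOperators
open Classical

noncomputable section

/-- The free associative algebra `K⟨A⟩` on the alphabet `A`, realized as the monoid algebra
of the free monoid on `A`. -/
abbrev NC (K A : Type*) [CommRing K] : Type _ := MonoidAlgebra K (FreeMonoid A)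

variable (K A : Type*) [CommRing K]

/-- The monomial (word) `w` viewed as an element of `K⟨A⟩`. -/
def wp (w : List A) : NC K A := MonoidAlgebra.single (FreeMonoid.ofList w) 1

/-- The coefficient `(P, w)` of the word `w` in the polynomial `P`. -/
def coeffW (P : NC K A) (w : List A) : K := P.coeff (FreeMonoid.ofList w)

/-- The canonical scalar product `(P, Q) = ∑_w (P, w)(Q, w)` on `K⟨A⟩`. -/
def sp (P Q : NC K A) : K := Finsupp.sum P.coeff fun w c => c * Q.coeff w

attribute [local instance 100] LieRing.ofAssociativeRing

/-- The free Lie algebra `L_K(A)`: the Lie subalgebra of `K⟨A⟩` (with the commutator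
bracket) generated by the letters. -/
def freeLie : LieSubalgebra K (NC K A) :=
  LieSubalgebra.lieSpan K (NC K A) (Set.range fun a : A => wp K A [a])

/-- The adjoint `λ` of the left-normed Lie bracketing, on words:
`λ(ε) = 0`, `λ(a) = a`, `λ(aub) = λ(au)b − λ(ub)a`. -/
def lam : List A → NC K A
  | [] => 0
  | [a] => wp K A [a]
  | a :: b :: t =>
      lam (a :: (b :: t).dropLast) * wp K A [(b :: t).getLast (by simp)] -
        lam (b :: t) * wp K A [a]
  termination_by w => w.length
  decreasing_by
    all_goals simp [List.length_dropLast]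

/-- `λ` extended linearly to the whole of `K⟨A⟩`. -/
def lamLin : NC K A →ₗ[K] NC K A :=
  Finsupp.linearCombination K (fun w : FreeMonoid A => lam K A (FreeMonoid.toList w)) ∘ₗ
    (MonoidAlgebra.coeffLinearEquiv K).toLinearMap

/-- The shuffle product of two words, as an element of `K⟨A⟩`. -/
def shuffleW : List A → List A → NC K A
  | [], v => wp K A v
  | u, [] => wp K A u
  | a :: u, b :: v =>
      wp K A [a] * shuffleW u (b :: v) + wp K A [b] * shuffleW (a :: u) v
  termination_by u v => u.length + v.length
  decreasing_by
    all_goals simp [Nat.lt_succ_iff]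

/-- The shuffle product on `K⟨A⟩`, extended bilinearly. -/
def sh (P Q : NC K A) : NC K A :=
  Finsupp.sum P.coeff fun u cu =>
    Finsupp.sum Q.coeff fun v cv =>
      (cu * cv) • shuffleW K A (FreeMonoid.toList u) (FreeMonoid.toList v)

/-- The right residual `P ▷ q` of `P` by a word `q`: `(P ▷ q, w) = (P, qw)`. -/
def rresW (P : NC K A) (q : List A) : NC K A :=
  Finsupp.sum P.coeff fun u c =>
    if q <+: FreeMonoid.toList u then c • wp K A ((FreeMonoid.toList u).drop q.length) else 0

/-- The right residual `P ▷ Q`: `(P ▷ Q, w) = (P, Qw)`. -/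
def rres (P Q : NC K A) : NC K A :=
  Finsupp.sum Q.coeff fun v c => c • rresW K A P (FreeMonoid.toList v)

/-- Auxiliary left residual by a word `q`: `(q ◁ P, w) = (P, wq)`. -/
def lresW (P : NC K A) (q : List A) : NC K A :=
  Finsupp.sum P.coeff fun u c =>
    if q <:+ FreeMonoid.toList u then
      c • wp K A ((FreeMonoid.toList u).take ((FreeMonoid.toList u).length - q.length))
    else 0

/-- The left residual `Q ◁ P`: `(Q ◁ P, w) = (P, wQ)`. -/
def lres (Q P : NC K A) : NC K A :=
  Finsupp.sum Q.coeff fun v c => c • lresW K A P (FreeMonoid.toList v)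

/-- The number of trailing occurrences of the letter `a` in the word `v`. -/
def trailCount (a : A) (v : FreeMonoid A) : ℕ :=
  ((FreeMonoid.toList v).reverse.takeWhile fun x => decide (x = a)).length

/-- `d(P)`: the least number of trailing `a`'s among the words in the support of `P`. -/
def dP (a : A) (P : NC K A) : ℕ :=
  sInf {n : ℕ | ∃ v ∈ Finsupp.support P.coeff, trailCount A a v = n}

/-- `e(P)`: the largest number of trailing `a`'s among the words in the support of `P`. -/
def eP (a : A) (P : NC K A) : ℕ :=
  Finset.sup (Finsupp.support P.coeff) (trailCount A a)

/-- The polynomial `P_i` in the decomposition `P = ∑ P_i b a^i`: it collects (and strips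
the suffix `b a^i` from) the monomials of `P` with exactly `i` trailing `a`'s. -/
def partBA (a b : A) (i : ℕ) (P : NC K A) : NC K A :=
  Finsupp.sum P.coeff fun v c =>
    if (FreeMonoid.toList v).reverse.take (i + 1) = List.replicate i a ++ [b] then
      c • wp K A ((FreeMonoid.toList v).take ((FreeMonoid.toList v).length - (i + 1)))
    else 0

/-- A word is Lyndon if it is nonempty and strictly smaller, in the lexicographic order,
than each of its proper nonempty right factors. -/
def IsLyndon {A : Type*} [LinearOrder A] (w : List A) : Prop :=
  w ≠ [] ∧ ∀ s t : List A, w = t ++ s → t ≠ [] → s ≠ [] → List.Lex (· < ·) w s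

/-- `γ(w)`: the nonnegative generator of the ideal `{(P, w) : P ∈ L_ℤ(A)}` of `ℤ`. -/
def gammaW (A : Type*) (w : List A) : ℤ :=
  haveI : (Ideal.span {c : ℤ | ∃ P ∈ freeLie ℤ A, coeffW ℤ A P w = c}).IsPrincipal :=
    IsPrincipalIdealRing.principal _
  (Submodule.IsPrincipal.generator
    (Ideal.span {c : ℤ | ∃ P ∈ freeLie ℤ A, coeffW ℤ A P w = c})).natAbs

end


/-!
Peeling the last letter off with `λ(x w y) = λ(x w) y − λ(w y) x` shows that `λ(b aⁿ⁺¹)` is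
`λ(b aⁿ) a` for `n ≥ 1`, hence `b aⁿ⁺¹ − a b aⁿ`, while `f(k, l) = λ(aᵏ b aˡ)` satisfies the
signed Pascal recursion `f(k+1, l+1) = (f(k+1, l) − f(k, l+1)) a`, with `λ(aⁿ⁺²) = 0` killing one
term on the boundary `l = 0`. The coefficients `(−1)ᵏ C(k+l, k)` solve that recursion.
-/

section

variable {K A : Type*} [CommRing K]

theorem wp_mul_wp (u v : List A) : wp K A u * wp K A v = wp K A (u ++ v) := by
  simp [wp, MonoidAlgebra.single_mul_single]

theorem lam_singleton (x : A) : lam K A [x] = wp K A [x] := by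
  rw [lam]

theorem lam_cons_append_singleton (x y : A) (w : List A) :
    lam K A (x :: (w ++ [y])) =
      lam K A (x :: w) * wp K A [y] - lam K A (w ++ [y]) * wp K A [x] := by
  cases w with
  | nil => rw [show x :: ([] ++ [y]) = [x, y] from rfl, lam.eq_3]; rfl
  | cons c t =>
    rw [List.cons_append, lam.eq_3]
    congr 3
    · rw [← List.cons_append, List.dropLast_concat]
    · simp

theorem lam_replicate (a : A) (n : ℕ) : lam K A (List.replicate (n + 2) a) = 0 := by
  rw [List.replicate_succ, List.replicate_succ', lam_cons_append_singleton,
    ← List.replicate_succ, ← List.replicate_succ', sub_self]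

theorem lam_cons_replicate_succ_succ (a b : A) (n : ℕ) :
    lam K A (b :: List.replicate (n + 2) a) =
      lam K A (b :: List.replicate (n + 1) a) * wp K A [a] := by
  rw [List.replicate_succ' (n := n + 1), lam_cons_append_singleton, ← List.replicate_succ',
    lam_replicate, zero_mul, sub_zero]

theorem lam_cons_replicate (a b : A) (n : ℕ) :
    lam K A (b :: List.replicate (n + 1) a) =
      wp K A (b :: List.replicate (n + 1) a) - wp K A (a :: b :: List.replicate n a) := by
  induction n with
  | zero =>
    rw [List.replicate_one, ← List.nil_append [a], lam_cons_append_singleton]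
    simp only [List.nil_append, lam_singleton, wp_mul_wp, List.replicate_zero]
    rfl
  | succ n ih =>
    rw [lam_cons_replicate_succ_succ, ih, sub_mul, wp_mul_wp, wp_mul_wp,
      List.cons_append, List.cons_append, List.cons_append, ← List.replicate_succ',
      ← List.replicate_succ']

theorem lam_replicate_append_singleton (a b : A) (n : ℕ) :
    lam K A (List.replicate (n + 2) a ++ [b]) =
      -(lam K A (List.replicate (n + 1) a ++ [b]) * wp K A [a]) := by
  rw [List.replicate_succ, List.cons_append, lam_cons_append_singleton, ← List.replicate_succ,
    lam_replicate, zero_mul, zero_sub]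

theorem lam_replicate_append_cons_replicate_succ (a b : A) (k l : ℕ) :
    lam K A (List.replicate (k + 1) a ++ b :: List.replicate (l + 1) a) =
      (lam K A (List.replicate (k + 1) a ++ b :: List.replicate l a) -
        lam K A (List.replicate k a ++ b :: List.replicate (l + 1) a)) * wp K A [a] := by
  have hsplit : List.replicate (k + 1) a ++ b :: List.replicate (l + 1) a =
      a :: ((List.replicate k a ++ b :: List.replicate l a) ++ [a]) := by
    rw [List.replicate_succ, List.replicate_succ']; simp
  rw [hsplit, lam_cons_append_singleton, sub_mul, ← List.cons_append, ← List.replicate_succ,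
    List.append_assoc, List.cons_append, ← List.replicate_succ']

theorem lam_replicate_append_cons_replicate (a b : A) {k l : ℕ} (hkl : k + l ≠ 0) :
    lam K A (List.replicate k a ++ b :: List.replicate l a) =
      ((-1 : K) ^ k * ((k + l).choose k : K)) • lam K A (b :: List.replicate (k + l) a) := by
  obtain ⟨n, hn⟩ := Nat.exists_eq_add_one_of_ne_zero hkl
  clear hkl
  induction n generalizing k l with
  | zero =>
    rcases k with _ | _ | k
    · simp
    · obtain rfl : l = 0 := by omega
      change lam K A (a :: ([] ++ [b])) = _ • lam K A (b :: ([] ++ [a]))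
      rw [lam_cons_append_singleton, lam_cons_append_singleton]
      simp [lam_singleton]
    · omega
  | succ n ih =>
    rcases k with _ | k
    · simp
    rcases l with _ | l
    · obtain rfl : k = n + 1 := by omega
      have hprev := ih (k := n + 1) (l := 0) rfl
      simp only [List.replicate_zero, add_zero] at hprev ⊢
      rw [lam_replicate_append_singleton, hprev, smul_mul_assoc, ← lam_cons_replicate_succ_succ,
        ← neg_smul]
      simp [pow_succ]
    · rw [lam_replicate_append_cons_replicate_succ, ih (by omega), ih (by omega),
        show k + 1 + l = k + l + 1 by omega, show k + (l + 1) = k + l + 1 by omega,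
        show k + 1 + (l + 1) = k + l + 2 by omega, ← sub_smul, smul_mul_assoc,
        ← lam_cons_replicate_succ_succ, Nat.choose_succ_succ' (k + l + 1)]
      congr 1
      push_cast
      ring

end

theorem lam_pow_b_pow_general
    (K A : Type*) [CommRing K] (a b : A)
    (k l : ℕ) (hkl : ¬(k = 0 ∧ l = 0)) :
    lam K A (List.replicate k a ++ b :: List.replicate l a) =
      ((-1 : K) ^ k * (Nat.choose (k + l) k : K)) • lam K A (b :: List.replicate (k + l) a) ∧
    lam K A (List.replicate k a ++ b :: List.replicate l a) =
      ((-1 : K) ^ k * (Nat.choose (k + l) k : K)) •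
        (wp K A (b :: List.replicate (k + l) a) -
          wp K A (a :: b :: List.replicate (k + l - 1) a)) := by
  have hpos : k + l ≠ 0 := by omega
  obtain ⟨n, hn⟩ := Nat.exists_eq_add_one_of_ne_zero hpos
  refine ⟨lam_replicate_append_cons_replicate a b hpos, ?_⟩
  rw [lam_replicate_append_cons_replicate a b hpos, hn, Nat.add_sub_cancel,
    lam_cons_replicate]

theorem lam_pow_b_pow
    (K A : Type*) [CommRing K] (a b : A) (hab : a ≠ b)
    (k l : ℕ) (hkl : ¬(k = 0 ∧ l = 0)) :
    lam K A (List.replicate k a ++ b :: List.replicate l a) =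
      ((-1 : K) ^ k * (Nat.choose (k + l) k : K)) • lam K A (b :: List.replicate (k + l) a) ∧
    lam K A (List.replicate k a ++ b :: List.replicate l a) =
      ((-1 : K) ^ k * (Nat.choose (k + l) k : K)) •
        (wp K A (b :: List.replicate (k + l) a) -
          wp K A (a :: b :: List.replicate (k + l - 1) a)) :=
  lam_pow_b_pow_general K A a b k l hkl
end

section
/- Let a, b be two distinct letters, and let m ≥ 0 and k ≥ 2 be integers. Then γ((b a^2 b a^{2k})^m b) is odd, where γ(w) is the nonnegative generator of the ideal {(P, w) : P ∈ L_ℤ({a,b})} of ℤ. -/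
open scoped BigOperators
open Classical

noncomputable section

variable (K A : Type*) [CommRing K]

attribute [local instance 100] LieRing.ofAssociativeRing

end

/-!
Modulo 2, the coefficient of a word `w` in the right-normed bracket `[v₁, [v₂, …, v_r]]` is
the parity of the number of ways to strip `v₁, v₂, …` in turn from either end of `w` until exactly
`v_r` remains. Take `v = (b a^{2k-1} b a³)^m b` and `w = (b a² b a^{2k})^m b`. Stripping the
leading `b` of `v` from the left of `w` leads nowhere since `k ≥ 2`; stripping it from the right,
the rest of the first block of `v` can be stripped in exactly three ways, each leaving the reverse
of the word for `m - 1`. So the coefficient is odd, and `γ(w)`, which divides it, is odd.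
-/

attribute [local instance 100] LieRing.ofAssociativeRing

theorem List.flatten_replicate_succ_append {A : Type*} (p q : List A) : ∀ m : ℕ,
    (List.replicate (m + 1) (p ++ q)).flatten = p ++ (List.replicate m (q ++ p)).flatten ++ q
  | 0 => by simp
  | m + 1 => by
    rw [List.replicate_succ, List.flatten_cons, List.flatten_replicate_succ_append p q m,
      List.replicate_succ, List.flatten_cons]
    simp

section Coefficients

variable {K A : Type*} [CommRing K]

theorem coeffW_wp (v w : List A) : coeffW K A (wp K A v) w = if w = v then 1 else 0 := by
  simp [coeffW, wp, MonoidAlgebra.coeff_single, Finsupp.single_apply, eq_comm]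

theorem coeffW_sub (P Q : NC K A) (w : List A) :
    coeffW K A (P - Q) w = coeffW K A P w - coeffW K A Q w := by
  simp [coeffW]

theorem coeffW_wp_mul (c : A) (P : NC K A) (w : List A) :
    coeffW K A (wp K A [c] * P) w = if w.head? = some c then coeffW K A P w.tail else 0 := by
  rcases w with _ | ⟨e, t⟩
  · refine MonoidAlgebra.coeff_single_mul_of_forall_mul_ne _ _ fun d h => ?_
    simpa using congrArg FreeMonoid.toList h
  · by_cases h : e = c
    · subst h
      simp [coeffW, wp]
    · rw [if_neg (by simpa using h)]
      refine MonoidAlgebra.coeff_single_mul_of_forall_mul_ne _ _ fun d hd => h ?_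
      have := congrArg FreeMonoid.toList hd
      simp only [FreeMonoid.toList_ofList, FreeMonoid.toList_mul, List.singleton_append,
        List.cons.injEq] at this
      exact this.1.symm

theorem coeffW_mul_wp (c : A) (P : NC K A) (w : List A) :
    coeffW K A (P * wp K A [c]) w =
      if w.getLast? = some c then coeffW K A P w.dropLast else 0 := by
  rcases List.eq_nil_or_concat' w with rfl | ⟨L, e, rfl⟩
  · refine MonoidAlgebra.coeff_mul_single_of_forall_mul_ne _ _ fun d h => ?_
    simpa using congrArg FreeMonoid.toList h
  · by_cases h : e = c
    · subst h
      simp [coeffW, wp]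
    · rw [if_neg (by simpa using h)]
      refine MonoidAlgebra.coeff_mul_single_of_forall_mul_ne _ _ fun d hd => h ?_
      have := congrArg FreeMonoid.toList hd
      simp only [FreeMonoid.toList_ofList, FreeMonoid.toList_mul] at this
      exact List.singleton_inj.1 (List.append_inj' this rfl).2.symm

end Coefficients

section RightNormed

variable {A : Type*}

noncomputable def rightNormed : List A → NC ℤ A
  | [] => 0
  | [c] => wp ℤ A [c]
  | c :: d :: t => ⁅wp ℤ A [c], rightNormed (d :: t)⁆

theorem rightNormed_mem_freeLie : ∀ {v : List A}, v ≠ [] → rightNormed v ∈ freeLie ℤ A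
  | [c], _ => LieSubalgebra.subset_lieSpan ⟨c, rfl⟩
  | c :: d :: t, _ => LieSubalgebra.lie_mem _ (LieSubalgebra.subset_lieSpan ⟨c, rfl⟩)
      (rightNormed_mem_freeLie (List.cons_ne_nil d t))

variable [DecidableEq A]

def peelParity : List A → List A → ZMod 2
  | [], _ => 0
  | [c], w => if w = [c] then 1 else 0
  | c :: d :: t, w =>
      (if w.head? = some c then peelParity (d :: t) w.tail else 0) +
      (if w.getLast? = some c then peelParity (d :: t) w.dropLast else 0)

theorem peelParity_cons (c : A) {x : List A} (hx : x ≠ []) (w : List A) :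
    peelParity (c :: x) w = (if w.head? = some c then peelParity x w.tail else 0) +
      (if w.getLast? = some c then peelParity x w.dropLast else 0) := by
  obtain ⟨d, t, rfl⟩ := List.exists_cons_of_ne_nil hx
  rfl

theorem intCast_coeffW_rightNormed : ∀ {v : List A}, v ≠ [] → ∀ w : List A,
    (coeffW ℤ A (rightNormed v) w : ZMod 2) = peelParity v w
  | [c], _, w => by
    simp [rightNormed, peelParity, coeffW_wp]
  | c :: d :: t, _, w => by
    simp only [rightNormed, Ring.lie_def, coeffW_sub, coeffW_wp_mul, coeffW_mul_wp, Int.cast_sub,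
      apply_ite (Int.cast : ℤ → ZMod 2), Int.cast_zero,
      intCast_coeffW_rightNormed (List.cons_ne_nil d t), peelParity, CharTwo.sub_eq_add]

end RightNormed

theorem odd_gammaW_of_mem_freeLie {A : Type*} {P : NC ℤ A} (hP : P ∈ freeLie ℤ A) {w : List A}
    (hodd : Odd (coeffW ℤ A P w)) : Odd (gammaW A w) := by
  have hdvd := (Submodule.IsPrincipal.mem_iff_generator_dvd _).1
    (Ideal.subset_span ⟨P, hP, rfl⟩ :
      coeffW ℤ A P w ∈ Ideal.span {c : ℤ | ∃ P ∈ freeLie ℤ A, coeffW ℤ A P w = c})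
  rw [gammaW, Int.odd_coe_nat]
  exact (Int.natAbs_odd.2 hodd).of_dvd_nat (Int.natAbs_dvd_natAbs.2 hdvd)

section Peeling

variable {A : Type*} [DecidableEq A] {a b : A}

attribute [local simp] List.getLast?_cons List.getLast?_append List.dropLast_cons_of_ne_nil
  List.dropLast_append_of_ne_nil

theorem peelParity_reverse : ∀ v w : List A, peelParity v w.reverse = peelParity v w
  | [], _ => rfl
  | [c], w => by simp [peelParity, List.reverse_eq_cons_iff]
  | c :: d :: t, w => by
    simp only [peelParity, List.head?_reverse, List.getLast?_reverse, List.tail_reverse,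
      List.dropLast_reverse, peelParity_reverse (d :: t)]
    exact add_comm _ _

theorem peelParity_replicate_append (hab : a ≠ b) {x : List A} (hx : x ≠ []) (y : List A) :
    ∀ n : ℕ, peelParity (List.replicate n a ++ x) (b :: (y ++ List.replicate n a)) =
      peelParity x (b :: y)
  | 0 => by simp
  | n + 1 => by
    rw [show List.replicate (n + 1) a ++ x = a :: (List.replicate n a ++ x) from rfl,
      peelParity_cons a (by simp [hx]), List.replicate_succ', ← List.append_assoc]
    simp [hab.symm, peelParity_replicate_append hab hx y n]

theorem peelParity_three_letters (hab : a ≠ b) {x : List A} (hx : x ≠ []) {Y : List A}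
    (hY : (b :: Y).getLast? ≠ some a) :
    peelParity (a :: a :: a :: x) (a :: a :: b :: (Y ++ [a])) = peelParity x (b :: Y) := by
  rw [List.getLast?_cons] at hY
  simp [peelParity_cons, hx, hab.symm, hY, CharTwo.add_self_eq_zero]

theorem peelParity_block (hab : a ≠ b) {n : ℕ} (hn : 3 ≤ n) {x : List A} (hx : x ≠ [])
    {Y : List A} (hY : (b :: Y).getLast? ≠ some a) :
    peelParity (b :: (List.replicate n a ++ b :: a :: a :: a :: x))
      (b :: a :: a :: b :: (Y ++ List.replicate (n + 1) a ++ [b])) = peelParity x (b :: Y) := by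
  obtain ⟨n, rfl⟩ : ∃ n', n = n' + 3 := ⟨n - 3, by omega⟩
  set rest := b :: a :: a :: a :: x
  have strip_left : peelParity (List.replicate (n + 3) a ++ rest)
      (a :: a :: b :: (Y ++ List.replicate (n + 3 + 1) a ++ [b])) = 0 := by
    simp [List.replicate_succ, peelParity_cons, hab.symm]
  have strip_right : peelParity (List.replicate (n + 3) a ++ rest)
      (b :: a :: a :: b :: (Y ++ List.replicate (n + 3 + 1) a)) =
      peelParity rest (b :: a :: a :: b :: (Y ++ [a])) := by
    rw [show List.replicate (n + 3 + 1) a = a :: List.replicate (n + 3) a from rfl]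
    simpa using peelParity_replicate_append hab (x := rest) (by simp [rest])
      (a :: a :: b :: (Y ++ [a])) (n + 3)
  have strip_b : peelParity rest (b :: a :: a :: b :: (Y ++ [a])) =
      peelParity (a :: a :: a :: x) (a :: a :: b :: (Y ++ [a])) := by
    simp [rest, peelParity_cons, hab]
  rw [peelParity_cons b (by simp), ← peelParity_three_letters hab hx hY, ← strip_b,
    ← strip_right]
  simpa using strip_left

theorem peelParity_flatten_replicate (hab : a ≠ b) {n : ℕ} (hn : 3 ≤ n) : ∀ m : ℕ,
    peelParity ((List.replicate m (b :: List.replicate n a ++ [b, a, a, a])).flatten ++ [b])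
      ((List.replicate m (b :: a :: a :: b :: List.replicate (n + 1) a)).flatten ++ [b]) = 1
  | 0 => by simp [peelParity]
  | m + 1 => by
    set Y := (List.replicate m (List.replicate (n + 1) a ++ [b, a, a, b])).flatten
    have hY : (b :: Y).getLast? ≠ some a := by
      cases m <;> simp [Y, List.replicate_succ', hab.symm]
    have hrev : b :: Y = ((List.replicate m (b :: a :: a :: b :: List.replicate (n + 1) a)).flatten
        ++ [b]).reverse := by
      simp [Y, List.reverse_flatten]
    have hv : (List.replicate (m + 1) (b :: List.replicate n a ++ [b, a, a, a])).flatten ++ [b] =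
        b :: (List.replicate n a ++ b :: a :: a :: a ::
          ((List.replicate m (b :: List.replicate n a ++ [b, a, a, a])).flatten ++ [b])) := by
      simp [List.replicate_succ]
    have hw : (List.replicate (m + 1) (b :: a :: a :: b :: List.replicate (n + 1) a)).flatten ++
        [b] = b :: a :: a :: b :: (Y ++ List.replicate (n + 1) a ++ [b]) := by
      simpa [Y] using congrArg (· ++ [b])
        (List.flatten_replicate_succ_append [b, a, a, b] (List.replicate (n + 1) a) m)
    rw [hv, hw, peelParity_block hab hn (by simp) hY, hrev, peelParity_reverse,
      peelParity_flatten_replicate hab hn m]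

end Peeling

theorem gamma_ba2ba2k_pow_b_odd
    (A : Type*) (a b : A) (hab : a ≠ b) (m k : ℕ) (hk : 2 ≤ k) :
    Odd (gammaW A
      ((List.replicate m (b :: a :: a :: b :: List.replicate (2 * k) a)).flatten ++ [b])) := by
  obtain ⟨n, hn⟩ : ∃ n, 2 * k = n + 1 := ⟨2 * k - 1, by omega⟩
  set v := (List.replicate m (b :: List.replicate n a ++ [b, a, a, a])).flatten ++ [b]
  have hv : v ≠ [] := by simp [v]
  refine odd_gammaW_of_mem_freeLie (rightNormed_mem_freeLie hv) ?_
  rw [← ZMod.intCast_eq_one_iff_odd, intCast_coeffW_rightNormed hv, hn]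
  exact peelParity_flatten_replicate hab (by omega) m
end
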